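/- Let Γ ⊂ Homeo(M) be a non-elementary convergence group and d a compatible metric on Γ ⊔ M. (1) If x ∈ Λ^{con}_ε(Γ) and 0 < ε' < ε, then there exists an escaping sequence (γ_n) in Γ such that x ∈ ∩_{n≥1} S_{ε'}(γ_n). (2) If there exists an escaping sequence (γ_n) in Γ such that x ∈ ∩_{n≥1} S_ε(γ_n), then x ∈ Λ^{con}_ε(Γ). -/

import Mathlib

open Filter Topology MeasureTheory Set

/-! Background definitions: convergence groups, coarse cocycles,
Patterson–Sullivan measures, following Blayac–Canary–Zhu–Zimmer. -/

/-- The group of self-homeomorphisms of a topological space,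
with `(f * g) x = f (g x)`. -/
instance homeomorphGroup {X : Type*} [TopologicalSpace X] : Group (X ≃ₜ X) where
  mul f g := g.trans f
  one := Homeomorph.refl X
  inv := Homeomorph.symm
  mul_assoc f g h := Homeomorph.ext fun _ => rfl
  one_mul f := Homeomorph.ext fun _ => rfl
  mul_one f := Homeomorph.ext fun _ => rfl
  inv_mul_cancel f := Homeomorph.ext fun x => f.symm_apply_apply x

/-- Locally uniform convergence of a sequence of maps to a constant map on a set `S`,
phrased purely topologically.  (For maps into a uniform space this is equivalent to
`TendstoLocallyUniformlyOn` with constant limit.) -/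
def TendstoLocallyUniformlyOnConst {X Y : Type*} [TopologicalSpace X] [TopologicalSpace Y]
    (F : ℕ → X → Y) (a : Y) (S : Set X) : Prop :=
  ∀ U ∈ nhds a, ∀ x ∈ S, ∃ V ∈ nhdsWithin x S, ∀ᶠ n in Filter.atTop, ∀ y ∈ V, F n y ∈ U

variable {M : Type*} [MetricSpace M] [CompactSpace M]

/-- `Γ` is a (discrete) convergence group: every sequence of pairwise distinct elements
has a subsequence converging to a constant map locally uniformly off a point. -/
def IsConvergenceGroup (Γ : Subgroup (M ≃ₜ M)) : Prop :=
  ∀ γ : ℕ → Γ, Function.Injective γ →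
    ∃ (a b : M) (φ : ℕ → ℕ), StrictMono φ ∧
      TendstoLocallyUniformlyOnConst (fun j x => (γ (φ j) : M ≃ₜ M) x) a {b}ᶜ

/-- The limit set of `Γ`. -/
def limitSet (Γ : Subgroup (M ≃ₜ M)) : Set M :=
  {a | ∃ (b : M) (γ : ℕ → Γ),
    TendstoLocallyUniformlyOnConst (fun n x => (γ n : M ≃ₜ M) x) a {b}ᶜ}

/-- `Γ` is non-elementary: its limit set has at least 3 points. -/
def IsNonElementary (Γ : Subgroup (M ≃ₜ M)) : Prop := 3 ≤ (limitSet Γ).encard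

/-- Conical limit points. -/
def IsConicalLimitPoint (Γ : Subgroup (M ≃ₜ M)) (x : M) : Prop :=
  ∃ (a b : M) (γ : ℕ → Γ), a ≠ b ∧
    Tendsto (fun n => (γ n : M ≃ₜ M) x) atTop (nhds a) ∧
    ∀ y : M, y ≠ x → Tendsto (fun n => (γ n : M ≃ₜ M) y) atTop (nhds b)

/-- The conical limit set `Λ^{con}(Γ)`. -/
def conicalLimitSet (Γ : Subgroup (M ≃ₜ M)) : Set M := {x | IsConicalLimitPoint Γ x}

/-- The natural action of `Γ` on `Γ ⊔ M`. -/
def sumAction (Γ : Subgroup (M ≃ₜ M)) (γ : Γ) : Γ ⊕ M → Γ ⊕ M :=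
  Sum.elim (fun α => Sum.inl (γ * α)) (fun x => Sum.inr ((γ : M ≃ₜ M) x))

/-- A compactifying topology on `Γ ⊔ M`: a compact metrizable topology for which the
inclusions of `Γ` (discrete) and `M` are embeddings and the natural `Γ`-action is a
convergence group action. -/
structure IsCompactifyingTopology (Γ : Subgroup (M ≃ₜ M))
    (t : TopologicalSpace (Γ ⊕ M)) : Prop where
  compact : @CompactSpace (Γ ⊕ M) t
  metrizable : @TopologicalSpace.MetrizableSpace (Γ ⊕ M) t
  isEmbedding_inl : @Topology.IsEmbedding Γ (Γ ⊕ M) ⊥ t Sum.inl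
  isEmbedding_inr : @Topology.IsEmbedding M (Γ ⊕ M) _ t Sum.inr
  continuous_action : ∀ γ : Γ, @Continuous (Γ ⊕ M) (Γ ⊕ M) t t (sumAction Γ γ)
  convergence : ∀ γ : ℕ → Γ, Function.Injective γ →
    ∃ (a b : Γ ⊕ M) (φ : ℕ → ℕ), StrictMono φ ∧
      @TendstoLocallyUniformlyOnConst (Γ ⊕ M) (Γ ⊕ M) t t
        (fun j => sumAction Γ (γ (φ j))) a {b}ᶜ

/-- The distance function of a metric-space structure given as data. -/
def cdist {X : Type*} (m : MetricSpace X) (p q : X) : ℝ := letI := m; dist p q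

/-- The topology of a metric-space structure given as data. -/
def ctop {X : Type*} (m : MetricSpace X) : TopologicalSpace X := letI := m; inferInstance

/-- A compatible metric on `Γ ⊔ M`: a metric whose topology is a compactifying topology. -/
def IsCompatibleMetric (Γ : Subgroup (M ≃ₜ M)) (m : MetricSpace (Γ ⊕ M)) : Prop :=
  IsCompactifyingTopology Γ (ctop m)

/-- The shadow `S_ε(γ) = γ (M ∖ B_ε(γ⁻¹))`. -/
def shadow {Γ : Subgroup (M ≃ₜ M)} (m : MetricSpace (Γ ⊕ M)) (ε : ℝ) (γ : Γ) : Set M :=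
  (fun x => (γ : M ≃ₜ M) x) '' {x : M | ε ≤ cdist m (Sum.inr x) (Sum.inl γ⁻¹)}

/-- The `ε`-uniform conical limit set. -/
def uniformConicalLimitSet (Γ : Subgroup (M ≃ₜ M)) (m : MetricSpace (Γ ⊕ M)) (ε : ℝ) :
    Set M :=
  {x | ∃ (a b : M) (γ : ℕ → Γ), ε ≤ cdist m (Sum.inr a) (Sum.inr b) ∧
    Tendsto (fun n => (γ n : M ≃ₜ M) x) atTop (nhds b) ∧
    ∀ y : M, y ≠ x → Tendsto (fun n => (γ n : M ≃ₜ M) y) atTop (nhds a)}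

/-- A `κ`-coarse-cocycle. -/
structure IsCoarseCocycle {Γ : Subgroup (M ≃ₜ M)} (σ : Γ → M → ℝ) (κ : ℝ) : Prop where
  nonneg : 0 ≤ κ
  coarse_cont : ∀ (γ : Γ) (x₀ : M), ∀ ε > 0, ∀ᶠ x in nhds x₀, |σ γ x₀ - σ γ x| < κ + ε
  cocycle : ∀ (γ₁ γ₂ : Γ) (x : M),
    |σ (γ₁ * γ₂) x - (σ γ₁ ((γ₂ : M ≃ₜ M) x) + σ γ₂ x)| ≤ κ

/-- `γ` is loxodromic with attracting fixed point `p` and repelling fixed point `q`. -/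
def IsLoxodromicWith {Γ : Subgroup (M ≃ₜ M)} (γ : Γ) (p q : M) : Prop :=
  p ≠ q ∧ (γ : M ≃ₜ M) p = p ∧ (γ : M ≃ₜ M) q = q ∧
  TendstoLocallyUniformlyOnConst (fun n x => ((γ ^ n : Γ) : M ≃ₜ M) x) p {q}ᶜ ∧
  TendstoLocallyUniformlyOnConst (fun n x => ((γ⁻¹ ^ n : Γ) : M ≃ₜ M) x) q {p}ᶜ

/-- `γ` is parabolic with unique fixed point `p`. -/
def IsParabolicWith {Γ : Subgroup (M ≃ₜ M)} (γ : Γ) (p : M) : Prop :=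
  (γ : M ≃ₜ M) p = p ∧ (∀ q : M, (γ : M ≃ₜ M) q = q → q = p) ∧
  TendstoLocallyUniformlyOnConst (fun n x => ((γ ^ n : Γ) : M ≃ₜ M) x) p {p}ᶜ ∧
  TendstoLocallyUniformlyOnConst (fun n x => ((γ⁻¹ ^ n : Γ) : M ≃ₜ M) x) p {p}ᶜ

/-- A proper coarse-cocycle: `σ(γ_n, γ_n⁺) → +∞` along distinct loxodromic elements
whose fixed-point pairs stay uniformly separated. -/
def IsProperCocycle {Γ : Subgroup (M ≃ₜ M)} (m : MetricSpace (Γ ⊕ M))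
    (σ : Γ → M → ℝ) : Prop :=
  ∀ (γ : ℕ → Γ) (p q : ℕ → M), Function.Injective γ →
    (∀ n, IsLoxodromicWith (γ n) (p n) (q n)) →
    (∃ c > 0, ∀ᶠ n in atTop, c ≤ cdist m (Sum.inr (q n)) (Sum.inr (p n))) →
    Tendsto (fun n => σ (γ n) (p n)) atTop atTop

/-- `σ` is expanding with magnitude function `h = ‖·‖_σ`. -/
def IsExpandingWith {Γ : Subgroup (M ≃ₜ M)} (m : MetricSpace (Γ ⊕ M))
    (σ : Γ → M → ℝ) (h : Γ → ℝ) : Prop :=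
  IsProperCocycle m σ ∧
  ∀ ε > 0, ∃ C > 0, ∀ (γ : Γ) (x : M),
    ε < cdist m (Sum.inr x) (Sum.inl γ⁻¹) → |σ γ x - h γ| ≤ C

/-- An escaping sequence in `Γ`. -/
def IsEscaping {Γ : Subgroup (M ≃ₜ M)} (γ : ℕ → Γ) : Prop :=
  ∀ F : Finset Γ, ∀ᶠ n in atTop, γ n ∉ F

/-- The critical exponent `δ_σ(Γ)` attached to a magnitude function `h = ‖·‖_σ`. -/
noncomputable def critExp {Γ : Subgroup (M ≃ₜ M)} (h : Γ → ℝ) : ℝ :=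
  sInf {s : ℝ | 0 < s ∧ Summable (fun γ : Γ => Real.exp (-s * h γ))}

/-- A `C`-coarse `σ`-Patterson–Sullivan measure of dimension `δ`. -/
def IsCoarsePS [MeasurableSpace M] [BorelSpace M] {Γ : Subgroup (M ≃ₜ M)}
    (σ : Γ → M → ℝ) (C δ : ℝ) (μ : Measure M) : Prop :=
  IsProbabilityMeasure μ ∧ 0 ≤ C ∧
  ∀ γ : Γ,
    Measure.map (γ : M ≃ₜ M) μ ≪ μ ∧ μ ≪ Measure.map (γ : M ≃ₜ M) μ ∧
    ∀ᵐ x ∂μ,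
      Real.exp (-C - δ * σ γ⁻¹ x) ≤ ((Measure.map (γ : M ≃ₜ M) μ).rnDeriv μ x).toReal ∧
      ((Measure.map (γ : M ≃ₜ M) μ).rnDeriv μ x).toReal ≤ Real.exp (C - δ * σ γ⁻¹ x)

/-- A coarse `σ`-Patterson–Sullivan measure of dimension `δ` (for some constant `C`). -/
def IsCoarsePSDim [MeasurableSpace M] [BorelSpace M] {Γ : Subgroup (M ≃ₜ M)}
    (σ : Γ → M → ℝ) (δ : ℝ) (μ : Measure M) : Prop :=
  ∃ C : ℝ, IsCoarsePS σ C δ μ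

/-- A `κ`-coarse Gromov–Patterson–Sullivan system `(σ, σ̄, G)`. -/
structure IsCoarseGPS {Γ : Subgroup (M ≃ₜ M)} (m : MetricSpace (Γ ⊕ M))
    (σ σb : Γ → M → ℝ) (G : M → M → ℝ) (κ : ℝ) : Prop where
  cocycle : IsCoarseCocycle σ κ
  cocycle_bar : IsCoarseCocycle σb κ
  proper : IsProperCocycle m σ
  proper_bar : IsProperCocycle m σb
  locBounded : ∀ x y : M, x ≠ y → ∃ (U V : Set M) (B : ℝ),
    IsOpen U ∧ IsOpen V ∧ x ∈ U ∧ y ∈ V ∧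
    ∀ x' ∈ U, ∀ y' ∈ V, x' ≠ y' → |G x' y'| ≤ B
  compat : ∀ (γ : Γ) (x y : M), x ≠ y →
    |(σb γ x + σ γ y) - (G ((γ : M ≃ₜ M) x) ((γ : M ≃ₜ M) y) - G x y)| ≤ κ

/-- The diagonal action of `Γ` on `M × M`. -/
def prodAct {Γ : Subgroup (M ≃ₜ M)} (γ : Γ) : M × M → M × M :=
  fun p => ((γ : M ≃ₜ M) p.1, (γ : M ≃ₜ M) p.2)

/-- `M^{(2)}`, the set of pairs of distinct points. -/
def offDiag2 (M : Type*) : Set (M × M) := {p : M × M | p.1 ≠ p.2}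


private lemma tluoc_subseq {X Y : Type*} [TopologicalSpace X] [TopologicalSpace Y]
    {F : ℕ → X → Y} {a : Y} {S : Set X}
    (h : TendstoLocallyUniformlyOnConst F a S) {φ : ℕ → ℕ} (hφ : Tendsto φ atTop atTop) :
    TendstoLocallyUniformlyOnConst (fun k => F (φ k)) a S := fun U hU x hx =>
  let ⟨V, hV, hF⟩ := h U hU x hx; ⟨V, hV, hφ.eventually hF⟩

private lemma tluoc_comp_tendsto {X Y : Type*} [TopologicalSpace X] [T1Space X]
    [TopologicalSpace Y] {F : ℕ → X → Y} {a : Y} {b : X}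
    (h : TendstoLocallyUniformlyOnConst F a {b}ᶜ)
    {u : ℕ → X} {w : X} (hw : w ≠ b) (hu : Tendsto u atTop (𝓝 w)) :
    Tendsto (fun n => F n (u n)) atTop (𝓝 a) := by
  rw [Filter.tendsto_def]
  intro U hU
  obtain ⟨V, hV, hF⟩ := h U hU w hw
  rw [isOpen_compl_singleton.nhdsWithin_eq hw] at hV
  have h2 : ∀ᶠ n in atTop, u n ∈ V := hu hV
  filter_upwards [hF, h2] with n h3 h4
  exact h3 _ h4

private lemma exists_inj_subseq {α : Type*} {γ : ℕ → α}
    (h : ∀ F : Finset α, ∀ᶠ n in atTop, γ n ∉ F) :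
    ∃ ψ : ℕ → ℕ, StrictMono ψ ∧ Function.Injective (fun k => γ (ψ k)) := by
  classical
  have key : ∀ (N : ℕ) (F : Finset α), ∃ n, N ≤ n ∧ γ n ∉ F := by
    intro N F
    obtain ⟨N', hN'⟩ := (eventually_atTop).mp (h F)
    exact ⟨max N N', le_max_left _ _, hN' _ (le_max_right _ _)⟩
  choose f hf1 hf2 using key
  let ψ : ℕ → ℕ := fun k => Nat.rec (f 0 ∅)
    (fun _ p => f (p + 1) (Finset.image γ (Finset.range (p + 1)))) k
  have hsucc : ∀ k, ψ (k + 1) = f (ψ k + 1) (Finset.image γ (Finset.range (ψ k + 1))) :=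
    fun k => rfl
  have hmono : StrictMono ψ := strictMono_nat_of_lt_succ (fun k => by
    rw [hsucc]
    exact lt_of_lt_of_le (Nat.lt_succ_self _) (hf1 _ _))
  refine ⟨ψ, hmono, ?_⟩
  have hne : ∀ k l, k < l → γ (ψ k) ≠ γ (ψ l) := by
    intro k l hkl
    obtain ⟨l', rfl⟩ : ∃ l', l = l' + 1 := ⟨l - 1, by omega⟩
    have h1 : γ (ψ (l' + 1)) ∉ Finset.image γ (Finset.range (ψ l' + 1)) := by
      rw [hsucc]; exact hf2 _ _
    intro he
    have hk : ψ k < ψ l' + 1 :=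
      Nat.lt_succ_of_le (hmono.monotone (Nat.lt_succ_iff.mp hkl))
    exact h1 (he ▸ Finset.mem_image_of_mem γ (Finset.mem_range.mpr hk))
  intro k l he
  simp only at he
  by_contra hkl
  rcases lt_or_gt_of_ne hkl with hlt | hlt
  · exact hne k l hlt he
  · exact hne l k hlt he.symm

private lemma exists_three {α : Type*} {s : Set α} (h3 : 3 ≤ s.encard) :
    ∃ x y z : α, x ∈ s ∧ y ∈ s ∧ z ∈ s ∧ x ≠ y ∧ x ≠ z ∧ y ≠ z := by
  obtain ⟨t, hts, ht⟩ := Set.exists_subset_encard_eq h3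
  obtain ⟨x, y, z, hxy, hxz, hyz, rfl⟩ := Set.encard_eq_three.mp ht
  exact ⟨x, y, z, hts (by simp), hts (by simp), hts (by simp), hxy, hxz, hyz⟩

private lemma exists_notin_pair {α : Type*} {s : Set α} (h3 : 3 ≤ s.encard) (a b : α) :
    ∃ x ∈ s, x ≠ a ∧ x ≠ b := by
  by_contra hcon
  push_neg at hcon
  have hsub : s ⊆ {a, b} := by
    intro q hq
    by_cases hqa : q = a
    · exact Or.inl hqa
    · exact Or.inr (hcon q hq hqa)
  have h2 : s.encard ≤ 2 := le_trans (Set.encard_mono hsub) (by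
    calc ({a, b} : Set α).encard ≤ ({b} : Set α).encard + 1 := Set.encard_insert_le _ _
      _ = 2 := by rw [Set.encard_singleton]; rfl)
  have := le_trans h3 h2
  norm_num at this

set_option linter.unusedSectionVars false
section Helpers2
variable {M : Type*} [MetricSpace M] [CompactSpace M] {Γ : Subgroup (M ≃ₜ M)}

private lemma coe_inv_eq (g : Γ) : ((g⁻¹ : Γ) : M ≃ₜ M) = (g : M ≃ₜ M).symm := rfl

private lemma sumAction_inr (g : Γ) (y : M) :
    sumAction Γ g (Sum.inr y) = Sum.inr ((g : M ≃ₜ M) y) := rfl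

private lemma escaping_of_ptwise {γ : ℕ → Γ} {a x y₁ y₂ : M}
    (h : ∀ y : M, y ≠ x → Tendsto (fun n => (γ n : M ≃ₜ M) y) atTop (𝓝 a))
    (h12 : y₁ ≠ y₂) (h1x : y₁ ≠ x) (h2x : y₂ ≠ x) : IsEscaping γ := by
  intro F
  by_contra hc
  have hfreq : ∃ᶠ n in atTop, γ n ∈ F := by
    rw [Filter.not_eventually] at hc
    simpa using hc
  have hinf : {n | γ n ∈ F}.Infinite := Nat.frequently_atTop_iff_infinite.mp hfreq
  obtain ⟨g, hgF, hginf⟩ : ∃ g ∈ F, {n | γ n = g}.Infinite := by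
    by_contra hfin
    push_neg at hfin
    have hsub : {n | γ n ∈ F} ⊆ ⋃ g ∈ (F : Set Γ), {n | γ n = g} := by
      intro n hn
      exact Set.mem_biUnion hn rfl
    exact hinf (Set.Finite.subset (Set.Finite.biUnion F.finite_toSet
      (fun g hg => (hfin g hg))) hsub)
  obtain ⟨φ, hφ, hφg⟩ :=
    extraction_of_frequently_atTop (Nat.frequently_atTop_iff_infinite.mpr hginf)
  have key : ∀ y : M, y ≠ x → (g : M ≃ₜ M) y = a := by
    intro y hy
    have h1 : Tendsto (fun k => (γ (φ k) : M ≃ₜ M) y) atTop (𝓝 a) :=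
      (h y hy).comp hφ.tendsto_atTop
    have h2 : (fun k => (γ (φ k) : M ≃ₜ M) y) = fun _ => (g : M ≃ₜ M) y :=
      funext fun k => by rw [hφg k]
    rw [h2] at h1
    exact tendsto_nhds_unique tendsto_const_nhds h1
  exact h12 ((g : M ≃ₜ M).injective ((key y₁ h1x).trans (key y₂ h2x).symm))

private lemma inv_comp_tendsto {θ : ℕ → Γ} {a₁ b₁ : M}
    (h : TendstoLocallyUniformlyOnConst (fun n x => (θ n : M ≃ₜ M) x) a₁ {b₁}ᶜ)
    {u : ℕ → M} {w : M} (hw : w ≠ a₁) (hu : Tendsto u atTop (𝓝 w)) :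
    Tendsto (fun n => (((θ n)⁻¹ : Γ) : M ≃ₜ M) (u n)) atTop (𝓝 b₁) := by
  by_contra hc
  rw [Metric.tendsto_atTop] at hc
  push_neg at hc
  obtain ⟨r, hr, hfr⟩ := hc
  have hfreq : ∃ᶠ n in atTop, r ≤ dist ((((θ n)⁻¹ : Γ) : M ≃ₜ M) (u n)) b₁ := by
    rw [Filter.frequently_atTop]
    intro N
    obtain ⟨n, hnN, hn⟩ := hfr N
    exact ⟨n, hnN, hn⟩
  obtain ⟨φ, hφ, hφr⟩ := extraction_of_frequently_atTop hfreq
  obtain ⟨z, -, φ₂, hφ₂, hz⟩ := isCompact_univ.tendsto_subseq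
    (x := fun k => (((θ (φ k))⁻¹ : Γ) : M ≃ₜ M) (u (φ k))) (fun k => Set.mem_univ _)
  have hz' : Tendsto (fun k => (((θ (φ (φ₂ k)))⁻¹ : Γ) : M ≃ₜ M) (u (φ (φ₂ k)))) atTop (𝓝 z) := hz
  have hzb : z ≠ b₁ := by
    have hd : Tendsto (fun k => dist ((((θ (φ (φ₂ k)))⁻¹ : Γ) : M ≃ₜ M) (u (φ (φ₂ k)))) b₁)
        atTop (𝓝 (dist z b₁)) := hz'.dist tendsto_const_nhds
    have hge : r ≤ dist z b₁ :=
      ge_of_tendsto hd (Filter.Eventually.of_forall fun k => hφr (φ₂ k))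
    intro he
    rw [he, dist_self] at hge
    linarith
  have h1 : Tendsto (fun k => (θ (φ (φ₂ k)) : M ≃ₜ M)
      ((((θ (φ (φ₂ k)))⁻¹ : Γ) : M ≃ₜ M) (u (φ (φ₂ k))))) atTop (𝓝 a₁) :=
    tluoc_comp_tendsto (tluoc_subseq h ((hφ.comp hφ₂).tendsto_atTop)) hzb hz'
  have h2 : (fun k => (θ (φ (φ₂ k)) : M ≃ₜ M)
      ((((θ (φ (φ₂ k)))⁻¹ : Γ) : M ≃ₜ M) (u (φ (φ₂ k))))) = fun k => u (φ (φ₂ k)) :=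
    funext fun k => by rw [coe_inv_eq]; exact (θ (φ (φ₂ k)) : M ≃ₜ M).apply_symm_apply _
  rw [h2] at h1
  have h3 : Tendsto (fun k => u (φ (φ₂ k))) atTop (𝓝 w) :=
    hu.comp ((hφ.comp hφ₂).tendsto_atTop)
  exact hw (tendsto_nhds_unique h3 h1)

end Helpers2

/-- Lemma 6.5: shadows versus uniform conical limit points. -/
theorem shadows_versus_uniform_conical
    {M : Type*} [MetricSpace M] [CompactSpace M]
    {Γ : Subgroup (M ≃ₜ M)} (hΓ : IsConvergenceGroup Γ) (hNE : IsNonElementary Γ)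
    (m : MetricSpace (Γ ⊕ M)) (hm : IsCompatibleMetric Γ m) :
    -- (1)
    (∀ (x : M) (ε ε' : ℝ), x ∈ uniformConicalLimitSet Γ m ε → 0 < ε' → ε' < ε →
      ∃ γ : ℕ → Γ, IsEscaping γ ∧ ∀ n : ℕ, x ∈ shadow m ε' (γ n)) ∧
    -- (2)
    (∀ (x : M) (ε : ℝ) (γ : ℕ → Γ), IsEscaping γ → (∀ n : ℕ, x ∈ shadow m ε (γ n)) →
      x ∈ uniformConicalLimitSet Γ m ε) := by
  classical
  letI : MetricSpace (Γ ⊕ M) := m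
  have hm' : IsCompactifyingTopology Γ (ctop m) := hm
  haveI : CompactSpace (Γ ⊕ M) := hm'.compact
  have hinr : Topology.IsEmbedding (Sum.inr : M → Γ ⊕ M) := hm'.isEmbedding_inr
  have hclosed : IsClosed (Set.range (Sum.inr : M → Γ ⊕ M)) :=
    (isCompact_range hinr.continuous).isClosed
  obtain ⟨p₁, p₂, p₃, hp₁, hp₂, hp₃, h12, h13, h23⟩ := exists_three hNE
  refine ⟨?_, ?_⟩
  · -- Part (1)
    intro x ε ε' hx hε' hε'ε
    obtain ⟨a, b, γ, hab, hγx, hγy⟩ := hx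
    have hε : (0 : ℝ) < ε := hε'.trans hε'ε
    have hab' : ε ≤ dist (Sum.inr a : Γ ⊕ M) (Sum.inr b) := hab
    have hba : b ≠ a := by
      rintro rfl
      rw [dist_self] at hab'
      linarith
    have hyy : ∃ y₁ y₂ : M, y₁ ≠ y₂ ∧ y₁ ≠ x ∧ y₂ ≠ x := by
      by_cases h1 : p₁ = x
      · exact ⟨p₂, p₃, h23, fun h => h12 (h1.trans h.symm),
          fun h => h13 (h1.trans h.symm)⟩
      · by_cases h2 : p₂ = x
        · exact ⟨p₁, p₃, h13, h1, fun h => h23 (h2.trans h.symm)⟩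
        · exact ⟨p₁, p₂, h12, h1, h2⟩
    obtain ⟨y₁, y₂, hy12, hy1x, hy2x⟩ := hyy
    have hesc : IsEscaping γ := escaping_of_ptwise hγy hy12 hy1x hy2x
    have hinl : Tendsto (fun n => (Sum.inl (γ n) : Γ ⊕ M)) atTop (𝓝 (Sum.inr a)) := by
      apply Filter.tendsto_of_subseq_tendsto
      intro ns hns
      obtain ⟨ψ, hψ, hinj⟩ := exists_inj_subseq (γ := fun n => γ (ns n))
        (fun F => hns.eventually (hesc F))
      obtain ⟨A, B, φ, hφ, hTLU0⟩ := hm'.convergence _ hinj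
      have hTLU : TendstoLocallyUniformlyOnConst
          (fun j => sumAction Γ (γ (ns (ψ (φ j))))) A {B}ᶜ := hTLU0
      have hsub : Tendsto (fun k => ns (ψ (φ k))) atTop atTop :=
        hns.comp ((hψ.comp hφ).tendsto_atTop)
      have hyB : ∃ y : M, y ≠ x ∧ (Sum.inr y : Γ ⊕ M) ≠ B := by
        by_cases hB1 : (Sum.inr y₁ : Γ ⊕ M) = B
        · exact ⟨y₂, hy2x, fun h => hy12 (Sum.inr_injective (h.trans hB1.symm)).symm⟩
        · exact ⟨y₁, hy1x, hB1⟩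
      obtain ⟨y, hyx, hyB⟩ := hyB
      have hA : A = Sum.inr a := by
        have t1 : Tendsto (fun k => sumAction Γ (γ (ns (ψ (φ k)))) (Sum.inr y))
            atTop (𝓝 A) := tluoc_comp_tendsto hTLU hyB tendsto_const_nhds
        have t2 : Tendsto (fun k => (Sum.inr ((γ (ns (ψ (φ k))) : M ≃ₜ M) y) : Γ ⊕ M))
            atTop (𝓝 (Sum.inr a)) :=
          hinr.tendsto_nhds_iff.mp ((hγy y hyx).comp hsub)
        exact tendsto_nhds_unique t1 t2
      by_cases hB : B = Sum.inl (1 : Γ)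
      · exfalso
        have t1 : Tendsto (fun k => sumAction Γ (γ (ns (ψ (φ k)))) (Sum.inr x))
            atTop (𝓝 A) :=
          tluoc_comp_tendsto hTLU (by rw [hB]; simp) tendsto_const_nhds
        have t2 : Tendsto (fun k => (Sum.inr ((γ (ns (ψ (φ k))) : M ≃ₜ M) x) : Γ ⊕ M))
            atTop (𝓝 (Sum.inr b)) :=
          hinr.tendsto_nhds_iff.mp (hγx.comp hsub)
        have t1' : Tendsto (fun k => (Sum.inr ((γ (ns (ψ (φ k))) : M ≃ₜ M) x) : Γ ⊕ M))
            atTop (𝓝 (Sum.inr a)) := by rw [← hA]; exact t1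
        exact hba (Sum.inr_injective (tendsto_nhds_unique t2 t1'))
      · refine ⟨fun k => ψ (φ k), ?_⟩
        have t1 : Tendsto (fun k => sumAction Γ (γ (ns (ψ (φ k)))) (Sum.inl (1 : Γ)))
            atTop (𝓝 A) :=
          tluoc_comp_tendsto hTLU (fun h => hB h.symm) tendsto_const_nhds
        have he : (fun k => sumAction Γ (γ (ns (ψ (φ k)))) (Sum.inl (1 : Γ)))
            = fun k => (Sum.inl (γ (ns (ψ (φ k)))) : Γ ⊕ M) := by
          funext k
          show (Sum.inl (γ (ns (ψ (φ k))) * 1) : Γ ⊕ M) = _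
          rw [mul_one]
        rw [he, hA] at t1
        exact t1
    have hbx : Tendsto (fun n => (Sum.inr ((γ n : M ≃ₜ M) x) : Γ ⊕ M))
        atTop (𝓝 (Sum.inr b)) := hinr.tendsto_nhds_iff.mp hγx
    have hd : Tendsto (fun n => dist (Sum.inr ((γ n : M ≃ₜ M) x) : Γ ⊕ M) (Sum.inl (γ n)))
        atTop (𝓝 (dist (Sum.inr b : Γ ⊕ M) (Sum.inr a))) := hbx.dist hinl
    have hlt : ε' < dist (Sum.inr b : Γ ⊕ M) (Sum.inr a) :=
      lt_of_lt_of_le hε'ε (by rw [dist_comm]; exact hab')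
    have hev : ∀ᶠ n in atTop,
        ε' ≤ dist (Sum.inr ((γ n : M ≃ₜ M) x) : Γ ⊕ M) (Sum.inl (γ n)) := by
      filter_upwards [hd (Ioi_mem_nhds hlt)] with n hn using le_of_lt hn
    obtain ⟨N, hN⟩ := eventually_atTop.mp hev
    refine ⟨fun n => (γ (n + N))⁻¹, ?_, ?_⟩
    · intro F
      filter_upwards [(tendsto_add_atTop_nat N).eventually (hesc (F.image (·⁻¹)))]
        with n hn hmem
      exact hn (by simpa using Finset.mem_image_of_mem (·⁻¹) hmem)
    · intro n
      refine ⟨(γ (n + N) : M ≃ₜ M) x, ?_, ?_⟩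
      · show ε' ≤ cdist m _ (Sum.inl ((γ (n + N))⁻¹)⁻¹)
        rw [inv_inv]
        exact hN (n + N) (Nat.le_add_left N n)
      · exact (γ (n + N) : M ≃ₜ M).symm_apply_apply x
  · -- Part (2)
    intro x ε γ hesc hx
    have hsh : ∀ n, ε ≤ dist
        (Sum.inr ((((γ n)⁻¹ : Γ) : M ≃ₜ M) x) : Γ ⊕ M) (Sum.inl ((γ n)⁻¹)) := by
      intro n
      obtain ⟨z, hz, hzx⟩ := hx n
      have hzz : (((γ n)⁻¹ : Γ) : M ≃ₜ M) x = z := by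
        rw [← hzx]
        exact (γ n : M ≃ₜ M).symm_apply_apply z
      rw [hzz]
      exact hz
    rcases le_or_gt ε 0 with hε | hε
    · -- degenerate case : every point is in the 0-uniform conical limit set
      obtain ⟨x₀, η₀, hη₀⟩ := hp₁
      obtain ⟨c, -, φ, hφ, hc⟩ := isCompact_univ.tendsto_subseq
        (x := fun n => (η₀ n : M ≃ₜ M) x₀) (fun n => Set.mem_univ _)
      have hc' : Tendsto (fun k => (η₀ (φ k) : M ≃ₜ M) x₀) atTop (𝓝 c) := hc
      obtain ⟨a₁, ha₁, ha₁p, ha₁c⟩ := exists_notin_pair hNE p₁ c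
      obtain ⟨b₁, θ, hθ⟩ := ha₁
      have hall : ∀ y : M,
          Tendsto (fun k => (((θ k)⁻¹ * η₀ (φ k) : Γ) : M ≃ₜ M) y) atTop (𝓝 b₁) := by
        intro y
        have hrw : (fun k => (((θ k)⁻¹ * η₀ (φ k) : Γ) : M ≃ₜ M) y)
            = fun k => (((θ k)⁻¹ : Γ) : M ≃ₜ M) ((η₀ (φ k) : M ≃ₜ M) y) := rfl
        rw [hrw]
        by_cases hy : y = x₀
        · subst hy
          exact inv_comp_tendsto hθ (Ne.symm ha₁c) hc'
        · have h1 : Tendsto (fun k => (η₀ (φ k) : M ≃ₜ M) y) atTop (𝓝 p₁) :=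
            (tluoc_comp_tendsto hη₀ hy tendsto_const_nhds).comp hφ.tendsto_atTop
          exact inv_comp_tendsto hθ (Ne.symm ha₁p) h1
      refine ⟨b₁, b₁, fun k => (θ k)⁻¹ * η₀ (φ k), ?_, hall x, fun y _ => hall y⟩
      show ε ≤ dist (Sum.inr b₁ : Γ ⊕ M) (Sum.inr b₁)
      rw [dist_self]
      exact hε
    · -- main case ε > 0
      have hδesc : IsEscaping (fun n => (γ n)⁻¹) := by
        intro F
        filter_upwards [hesc (F.image (·⁻¹))] with n hn h
        exact hn (by simpa using Finset.mem_image_of_mem (·⁻¹) h)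
      obtain ⟨ψ, hψ, hinj⟩ := exists_inj_subseq hδesc
      obtain ⟨A, B, φ, hφ, hTLU0⟩ := hm'.convergence _ hinj
      have hTLU : TendstoLocallyUniformlyOnConst
          (fun j => sumAction Γ ((γ (ψ (φ j)))⁻¹)) A {B}ᶜ := hTLU0
      set η : ℕ → Γ := fun k => (γ (ψ (φ k)))⁻¹ with hηdef
      have hshη : ∀ k, ε ≤ dist (Sum.inr ((η k : M ≃ₜ M) x) : Γ ⊕ M) (Sum.inl (η k)) :=
        fun k => hsh (ψ (φ k))
      have hAr : A ∈ Set.range (Sum.inr : M → Γ ⊕ M) := by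
        have hyB : ∃ y : M, (Sum.inr y : Γ ⊕ M) ≠ B := by
          by_cases h1 : (Sum.inr p₁ : Γ ⊕ M) = B
          · exact ⟨p₂, fun h => h12 (Sum.inr_injective (h.trans h1.symm)).symm⟩
          · exact ⟨p₁, h1⟩
        obtain ⟨y, hyB⟩ := hyB
        have t1 : Tendsto (fun k => sumAction Γ (η k) (Sum.inr y)) atTop (𝓝 A) :=
          tluoc_comp_tendsto hTLU hyB tendsto_const_nhds
        exact hclosed.mem_of_tendsto t1
          (Filter.Eventually.of_forall fun k => ⟨(η k : M ≃ₜ M) y, rfl⟩)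
      obtain ⟨a, hAa⟩ := hAr
      have hBr : B ∈ Set.range (Sum.inr : M → Γ ⊕ M) := by
        have hz : ∃ z : M, z ≠ a := by
          by_cases h1 : p₁ = a
          · exact ⟨p₂, fun h => h12 (h1.trans h.symm)⟩
          · exact ⟨p₁, h1⟩
        obtain ⟨z₀, hz₀⟩ := hz
        obtain ⟨C, -, φ₂, hφ₂, hC⟩ := isCompact_univ.tendsto_subseq
          (x := fun k => (Sum.inr ((((η k)⁻¹ : Γ) : M ≃ₜ M) z₀) : Γ ⊕ M))
          (fun k => Set.mem_univ _)
        have hC' : Tendsto (fun k =>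
            (Sum.inr ((((η (φ₂ k))⁻¹ : Γ) : M ≃ₜ M) z₀) : Γ ⊕ M)) atTop (𝓝 C) := hC
        have hCB : C = B := by
          by_contra hCB
          have t1 : Tendsto (fun k => sumAction Γ (η (φ₂ k))
              (Sum.inr ((((η (φ₂ k))⁻¹ : Γ) : M ≃ₜ M) z₀))) atTop (𝓝 A) :=
            tluoc_comp_tendsto (tluoc_subseq hTLU hφ₂.tendsto_atTop) hCB hC'
          have he : (fun k => sumAction Γ (η (φ₂ k))
              (Sum.inr ((((η (φ₂ k))⁻¹ : Γ) : M ≃ₜ M) z₀))) = fun _ => (Sum.inr z₀ : Γ ⊕ M) := by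
            funext k
            exact congrArg Sum.inr ((η (φ₂ k) : M ≃ₜ M).apply_symm_apply z₀)
          rw [he] at t1
          have ht : (Sum.inr z₀ : Γ ⊕ M) = A := tendsto_nhds_unique tendsto_const_nhds t1
          exact hz₀ (Sum.inr_injective (ht.trans hAa.symm))
        rw [← hCB]
        exact hclosed.mem_of_tendsto hC' (Filter.Eventually.of_forall fun k => ⟨_, rfl⟩)
      obtain ⟨x₀, hBx₀⟩ := hBr
      have hinl : Tendsto (fun k => (Sum.inl (η k) : Γ ⊕ M)) atTop (𝓝 A) := by
        have t1 : Tendsto (fun k => sumAction Γ (η k) (Sum.inl (1 : Γ))) atTop (𝓝 A) :=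
          tluoc_comp_tendsto hTLU (by rw [← hBx₀]; simp) tendsto_const_nhds
        have he : (fun k => sumAction Γ (η k) (Sum.inl (1 : Γ)))
            = fun k => (Sum.inl (η k) : Γ ⊕ M) := by
          funext k
          show (Sum.inl (η k * 1) : Γ ⊕ M) = _
          rw [mul_one]
        rwa [he] at t1
      have hxx : x₀ = x := by
        by_contra hne
        have t1 : Tendsto (fun k => sumAction Γ (η k) (Sum.inr x)) atTop (𝓝 A) :=
          tluoc_comp_tendsto hTLU
            (by rw [← hBx₀]; exact fun h => hne (Sum.inr_injective h).symm)
            tendsto_const_nhds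
        have t1' : Tendsto (fun k => (Sum.inr ((η k : M ≃ₜ M) x) : Γ ⊕ M))
            atTop (𝓝 A) := t1
        have hd : Tendsto (fun k => dist (Sum.inr ((η k : M ≃ₜ M) x) : Γ ⊕ M)
            (Sum.inl (η k))) atTop (𝓝 (dist A A)) := t1'.dist hinl
        have hge : ε ≤ dist A A := ge_of_tendsto hd (Filter.Eventually.of_forall hshη)
        rw [dist_self] at hge
        linarith
      subst hxx
      obtain ⟨D, -, φ₃, hφ₃, hD⟩ := isCompact_univ.tendsto_subseq
        (x := fun k => (Sum.inr ((η k : M ≃ₜ M) x₀) : Γ ⊕ M)) (fun k => Set.mem_univ _)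
      have hD' : Tendsto (fun k => (Sum.inr ((η (φ₃ k) : M ≃ₜ M) x₀) : Γ ⊕ M))
          atTop (𝓝 D) := hD
      have hDr : D ∈ Set.range (Sum.inr : M → Γ ⊕ M) :=
        hclosed.mem_of_tendsto hD' (Filter.Eventually.of_forall fun k => ⟨_, rfl⟩)
      obtain ⟨b, hDb⟩ := hDr
      refine ⟨a, b, fun k => η (φ₃ k), ?_, ?_, ?_⟩
      · have hd : Tendsto (fun k => dist (Sum.inr ((η (φ₃ k) : M ≃ₜ M) x₀) : Γ ⊕ M)
            (Sum.inl (η (φ₃ k)))) atTop (𝓝 (dist D A)) :=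
          hD'.dist (hinl.comp hφ₃.tendsto_atTop)
        have h2 : ε ≤ dist D A :=
          ge_of_tendsto hd (Filter.Eventually.of_forall fun k => hshη (φ₃ k))
        show ε ≤ dist (Sum.inr a : Γ ⊕ M) (Sum.inr b)
        rw [← hAa, ← hDb, dist_comm] at h2
        exact h2
      · have ht : Tendsto (fun k => (Sum.inr ((η (φ₃ k) : M ≃ₜ M) x₀) : Γ ⊕ M))
            atTop (𝓝 (Sum.inr b)) := by rw [hDb]; exact hD'
        exact hinr.tendsto_nhds_iff.mpr ht
      · intro y hy
        have t1 : Tendsto (fun k => sumAction Γ (η k) (Sum.inr y)) atTop (𝓝 A) :=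
          tluoc_comp_tendsto hTLU
            (fun h => hy (Sum.inr_injective (h.trans hBx₀.symm)))
            tendsto_const_nhds
        have t2 : Tendsto (fun k => (Sum.inr ((η (φ₃ k) : M ≃ₜ M) y) : Γ ⊕ M))
            atTop (𝓝 (Sum.inr a)) := by
          rw [← hAa] at t1
          exact t1.comp hφ₃.tendsto_atTop
        exact hinr.tendsto_nhds_iff.mpr t2
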